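/- Let D1 and D2 be acyclic digraphs sharing exactly one vertex u with N⁻_{D1}(u) = ∅ and N⁺_{D2}(u) = ∅, let D = D1 ∪ D2, and suppose each D_i is a good digraph of a hypergraph H_i (i.e., NH(D_i) = H_i and each hyperedge of H_i contains at most one degree-one vertex with both in- and out-neighbour sets nonempty in D_i). Then D is a good digraph of the hypergraph H with V(H) = V(H1) ∪ V(H2) and E(H) = E(H1) ∪ E(H2), provided u is a degree-one vertex in both H1 and H2. -/

import Mathlib

/-- A digraph: a finite vertex set together with a finite set of arcs. -/
structure FinDigraph (α : Type*) where
  verts : Finset α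
  arcs : Finset (α × α)

namespace FinDigraph

variable {α : Type*} [DecidableEq α]

/-- A digraph is legal if arcs join distinct vertices of the digraph and
at most one of `(u,v)`, `(v,u)` is an arc. -/
def IsLegal (D : FinDigraph α) : Prop :=
  (∀ a ∈ D.arcs, a.1 ∈ D.verts ∧ a.2 ∈ D.verts ∧ a.1 ≠ a.2) ∧
    ∀ u v : α, (u, v) ∈ D.arcs → (v, u) ∉ D.arcs

/-- A digraph is acyclic if it has no directed cycle `x₀, x₁, ..., x_{n-1}, x₀`
with `n ≥ 3` and all `xᵢ` distinct. -/
def IsAcyclic (D : FinDigraph α) : Prop :=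
  ¬ ∃ (n : ℕ) (x : ℕ → α), 3 ≤ n ∧
      (∀ i < n, ∀ j < n, i ≠ j → x i ≠ x j) ∧
      (∀ i, i + 1 < n → (x i, x (i + 1)) ∈ D.arcs) ∧
      (x (n - 1), x 0) ∈ D.arcs

/-- The in-neighbour set of a vertex. -/
def inN (D : FinDigraph α) (v : α) : Finset α :=
  D.verts.filter fun u => (u, v) ∈ D.arcs

/-- The out-neighbour set of a vertex. -/
def outN (D : FinDigraph α) (v : α) : Finset α :=
  D.verts.filter fun u => (v, u) ∈ D.arcs

/-- The (edge set of the) niche hypergraph of a digraph: all sets of size at least 2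
which are the in-neighbour set or the out-neighbour set of some vertex. -/
def NH (D : FinDigraph α) : Finset (Finset α) :=
  ((D.verts.image D.inN) ∪ (D.verts.image D.outN)).filter fun e => 2 ≤ e.card

end FinDigraph

/-- A hypergraph: a finite vertex set and a finite family of hyperedges, each a
subset of the vertices of size at least 2. -/
structure FinHypergraph (α : Type*) where
  verts : Finset α
  edges : Finset (Finset α)
  edge_sub : ∀ e ∈ edges, e ⊆ verts
  edge_card : ∀ e ∈ edges, 2 ≤ e.card

namespace FinHypergraph

variable {α : Type*} [DecidableEq α]

/-- The degree of a vertex: the number of hyperedges containing it. -/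
def degree (H : FinHypergraph α) (v : α) : ℕ :=
  (H.edges.filter fun e => v ∈ e).card

/-- A hypergraph is linear if distinct hyperedges share at most one vertex. -/
def IsLinear (H : FinHypergraph α) : Prop :=
  ∀ e ∈ H.edges, ∀ f ∈ H.edges, e ≠ f → (e ∩ f).card ≤ 1

/-- A hypergraph is a hypertree if there is a tree on its vertex set in which
every hyperedge induces a connected subgraph. -/
def IsHypertree (H : FinHypergraph α) : Prop :=
  ∃ T : SimpleGraph {x // x ∈ H.verts}, T.IsTree ∧
    ∀ e ∈ H.edges, (T.induce {x : {x // x ∈ H.verts} | x.1 ∈ e}).Connected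

/-- The number of hyperedges intersecting `e` (other than `e` itself), i.e. the
edge degree of `e`. -/
def nbrCount (H : FinHypergraph α) (e : Finset α) : ℕ :=
  (H.edges.filter fun f => f ≠ e ∧ (e ∩ f).Nonempty).card

/-- A twig: a hyperedge intersecting exactly one other hyperedge. -/
def IsTwig (H : FinHypergraph α) (e : Finset α) : Prop :=
  e ∈ H.edges ∧ H.nbrCount e = 1

/-- A trunk: a hyperedge intersecting at least two other hyperedges. -/
def IsTrunk (H : FinHypergraph α) (e : Finset α) : Prop :=
  e ∈ H.edges ∧ 2 ≤ H.nbrCount e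

instance (H : FinHypergraph α) : DecidablePred H.IsTwig := fun e => by
  unfold IsTwig; infer_instance

instance (H : FinHypergraph α) : DecidablePred H.IsTrunk := fun e => by
  unfold IsTrunk; infer_instance

/-- The branch of a trunk `e`: `e` together with all twigs intersecting `e`. -/
def branch (H : FinHypergraph α) (e : Finset α) : Finset (Finset α) :=
  insert e (H.edges.filter fun f => H.IsTwig f ∧ (e ∩ f).Nonempty)

/-- A family of hyperedges is connected if any two vertices covered by the family are
joined by a chain of vertices in which consecutive vertices share a hyperedge. -/
def EdgesConnected (E : Finset (Finset α)) : Prop :=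
  ∀ u v : α, (∃ f ∈ E, u ∈ f) → (∃ f ∈ E, v ∈ f) →
    Relation.ReflTransGen (fun a b => ∃ f ∈ E, a ∈ f ∧ b ∈ f) u v

end FinHypergraph

/-- `D` is a good digraph of `H` if `D` is acyclic, `NH(D) = H`, and every hyperedge of
`H` contains at most one bud (degree-one vertex) whose in- and out-neighbour sets in `D`
are both nonempty. -/
def GoodDigraph {α : Type*} [DecidableEq α] (D : FinDigraph α) (H : FinHypergraph α) : Prop :=
  D.IsAcyclic ∧ D.verts = H.verts ∧ D.NH = H.edges ∧
    ∀ e ∈ H.edges,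
      (e.filter fun v => H.degree v = 1 ∧ (D.inN v).Nonempty ∧ (D.outN v).Nonempty).card ≤ 1

/-! Every arc of `D₁ ∪ D₂` lies in `D₁` or in `D₂`, and the two digraphs share only `u`.
Since `u` has no in-arc in `D₁`, no arc of `D₁` is followed by an arc of `D₂`, so a directed
cycle of the union that uses an arc of `D₁` stays in `D₁` all the way round: every cycle lies in
one of the `Dᵢ`. For the same reason every vertex has a nonempty in-neighbourhood (resp.
out-neighbourhood) in at most one `Dᵢ`, so the niche hypergraph of the union is `H₁ ∪ H₂`.
Hyperedges of `H₁` and `H₂` meet in at most `u`, so they are distinct; thus `u` gets degree two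
and is no longer a bud, while any other bud of an `Hᵢ`-hyperedge lies in `Dᵢ` only and keeps its
degree and its neighbourhoods from there. -/

theorem forall_lt_of_mod_succ_closed {n : ℕ} {P : ℕ → Prop}
    (hstep : ∀ i < n, P i → P ((i + 1) % n)) {i₀ : ℕ} (hi₀ : i₀ < n) (hP : P i₀) :
    ∀ j < n, P j := by
  have hsucc : ∀ i, i + 1 < n → P i → P (i + 1) := fun i hi hPi => by
    simpa [Nat.mod_eq_of_lt hi] using hstep i (by omega) hPi
  have hup : ∀ j, i₀ ≤ j → j < n → P j := by
    intro j hj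
    induction j, hj using Nat.le_induction with
    | base => exact fun _ => hP
    | succ j _ ih => exact fun hj => hsucc j hj (ih (by omega))
  have hzero : P 0 := by
    simpa [Nat.sub_add_cancel (by omega : 1 ≤ n)] using
      hstep (n - 1) (by omega) (hup (n - 1) (by omega) (by omega))
  intro j hj
  induction j with
  | zero => exact hzero
  | succ j ih => exact hsucc j hj (ih (by omega))

theorem Finset.notMem_or_notMem_of_inter_subset_singleton {α : Type*} [DecidableEq α]
    {s t : Finset α} {u v : α} (h : s ∩ t ⊆ {u}) (hv : v ≠ u) : v ∉ s ∨ v ∉ t := by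
  by_contra! hst
  exact hv (Finset.mem_singleton.1 (h (Finset.mem_inter.2 hst)))

theorem Finset.union_eq_iff_of_eq_empty_or {α : Type*} [DecidableEq α] {s t u : Finset α}
    (h : s = ∅ ∨ t = ∅) (hu : u.Nonempty) : s ∪ t = u ↔ s = u ∨ t = u := by
  rcases h with rfl | rfl <;> simp [eq_comm (a := ∅), hu.ne_empty]

namespace FinDigraph

variable {α : Type*}

def ArcsWithin (D : FinDigraph α) : Prop :=
  ∀ a ∈ D.arcs, a.1 ∈ D.verts ∧ a.2 ∈ D.verts

theorem IsLegal.arcsWithin {D : FinDigraph α} (h : D.IsLegal) : D.ArcsWithin :=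
  fun a ha => ⟨(h.1 a ha).1, (h.1 a ha).2.1⟩

theorem isAcyclic_iff {D : FinDigraph α} :
    D.IsAcyclic ↔ ∀ (n : ℕ) (x : ℕ → α), 3 ≤ n → (∀ i < n, ∀ j < n, i ≠ j → x i ≠ x j) →
      ¬ ∀ i < n, (x i, x ((i + 1) % n)) ∈ D.arcs := by
  simp only [IsAcyclic, not_exists, not_and]
  refine forall_congr' fun n => forall_congr' fun x => forall_congr' fun hn => ?_
  have hclosed : (∀ i < n, (x i, x ((i + 1) % n)) ∈ D.arcs) ↔
      (∀ i, i + 1 < n → (x i, x (i + 1)) ∈ D.arcs) ∧ (x (n - 1), x 0) ∈ D.arcs := by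
    constructor
    · intro h
      refine ⟨fun i hi => by simpa [Nat.mod_eq_of_lt hi] using h i (by omega), ?_⟩
      simpa [Nat.sub_add_cancel (by omega : 1 ≤ n)] using h (n - 1) (by omega)
    · rintro ⟨h, hlast⟩ i hi
      by_cases hi' : i + 1 < n
      · rw [Nat.mod_eq_of_lt hi']
        exact h i hi'
      · obtain rfl : i = n - 1 := by omega
        rwa [Nat.sub_add_cancel (by omega), Nat.mod_self]
  rw [hclosed]
  tauto

variable [DecidableEq α]

def union (D₁ D₂ : FinDigraph α) : FinDigraph α :=
  ⟨D₁.verts ∪ D₂.verts, D₁.arcs ∪ D₂.arcs⟩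

theorem union_comm (D₁ D₂ : FinDigraph α) : D₁.union D₂ = D₂.union D₁ := by
  simp only [union, Finset.union_comm]

theorem ArcsWithin.union {D₁ D₂ : FinDigraph α} (h₁ : D₁.ArcsWithin)
    (h₂ : D₂.ArcsWithin) : (D₁.union D₂).ArcsWithin := by
  intro a ha
  rcases Finset.mem_union.1 ha with ha | ha
  · exact ⟨Finset.mem_union_left _ (h₁ a ha).1, Finset.mem_union_left _ (h₁ a ha).2⟩
  · exact ⟨Finset.mem_union_right _ (h₂ a ha).1, Finset.mem_union_right _ (h₂ a ha).2⟩


@[simp]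
theorem mem_inN {D : FinDigraph α} {v w : α} : w ∈ D.inN v ↔ w ∈ D.verts ∧ (w, v) ∈ D.arcs := by
  simp [inN]

@[simp]
theorem mem_outN {D : FinDigraph α} {v w : α} :
    w ∈ D.outN v ↔ w ∈ D.verts ∧ (v, w) ∈ D.arcs := by
  simp [outN]

theorem inN_eq_empty_of_notMem {D : FinDigraph α} (hD : D.ArcsWithin) {v : α}
    (hv : v ∉ D.verts) : D.inN v = ∅ :=
  Finset.eq_empty_of_forall_notMem fun _ hw => hv (hD _ (mem_inN.1 hw).2).2

theorem outN_eq_empty_of_notMem {D : FinDigraph α} (hD : D.ArcsWithin) {v : α}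
    (hv : v ∉ D.verts) : D.outN v = ∅ :=
  Finset.eq_empty_of_forall_notMem fun _ hw => hv (hD _ (mem_outN.1 hw).2).1

theorem mem_NH_iff {D : FinDigraph α} (hD : D.ArcsWithin) {e : Finset α} :
    e ∈ D.NH ↔ 2 ≤ e.card ∧ ∃ v, D.inN v = e ∨ D.outN v = e := by
  simp only [NH, Finset.mem_filter, Finset.mem_union, Finset.mem_image]
  constructor
  · rintro ⟨⟨v, -, hv⟩ | ⟨v, -, hv⟩, he⟩
    exacts [⟨he, v, .inl hv⟩, ⟨he, v, .inr hv⟩]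
  · rintro ⟨he, v, hv⟩
    have hvD : v ∈ D.verts := by
      by_contra hvD
      rw [inN_eq_empty_of_notMem hD hvD, outN_eq_empty_of_notMem hD hvD, or_self] at hv
      subst hv
      simp at he
    rcases hv with hv | hv
    exacts [⟨.inl ⟨v, hvD, hv⟩, he⟩, ⟨.inr ⟨v, hvD, hv⟩, he⟩]

variable {D₁ D₂ : FinDigraph α}

theorem inN_union (h₁ : D₁.ArcsWithin) (h₂ : D₂.ArcsWithin) (v : α) :
    (D₁.union D₂).inN v = D₁.inN v ∪ D₂.inN v := by
  ext w
  have := h₁ (w, v)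
  have := h₂ (w, v)
  simp only [mem_inN, union, Finset.mem_union] at *
  tauto

theorem outN_union (h₁ : D₁.ArcsWithin) (h₂ : D₂.ArcsWithin) (v : α) :
    (D₁.union D₂).outN v = D₁.outN v ∪ D₂.outN v := by
  ext w
  have := h₁ (v, w)
  have := h₂ (v, w)
  simp only [mem_outN, union, Finset.mem_union] at *
  tauto

theorem NH_union (h₁ : D₁.ArcsWithin) (h₂ : D₂.ArcsWithin)
    (hin : ∀ v, D₁.inN v = ∅ ∨ D₂.inN v = ∅) (hout : ∀ v, D₁.outN v = ∅ ∨ D₂.outN v = ∅) :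
    (D₁.union D₂).NH = D₁.NH ∪ D₂.NH := by
  ext e
  simp only [Finset.mem_union, mem_NH_iff h₁, mem_NH_iff h₂, mem_NH_iff (h₁.union h₂),
    inN_union h₁ h₂, outN_union h₁ h₂, ← and_or_left]
  refine and_congr_right fun he => ?_
  have hne : e.Nonempty := Finset.card_pos.1 (by omega)
  simp only [fun v => Finset.union_eq_iff_of_eq_empty_or (hin v) hne,
    fun v => Finset.union_eq_iff_of_eq_empty_or (hout v) hne, ← exists_or]
  exact exists_congr fun v => by tauto

theorem IsAcyclic.union (hac₁ : D₁.IsAcyclic) (hac₂ : D₂.IsAcyclic)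
    (hturn : ∀ a b c, (a, b) ∈ D₁.arcs → (b, c) ∉ D₂.arcs) : (D₁.union D₂).IsAcyclic := by
  rw [isAcyclic_iff] at *
  intro n x hn hinj hcyc
  replace hcyc := fun i hi => Finset.mem_union.1 (hcyc i hi)
  by_cases h₁ : ∃ i < n, (x i, x ((i + 1) % n)) ∈ D₁.arcs
  · obtain ⟨i, hi, hi₁⟩ := h₁
    refine hac₁ n x hn hinj (forall_lt_of_mod_succ_closed (fun j hj hj₁ => ?_) hi hi₁)
    exact (hcyc _ (Nat.mod_lt _ (by omega))).resolve_right (hturn _ _ _ hj₁)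
  · simp only [not_exists, not_and] at h₁
    exact hac₂ n x hn hinj fun i hi => (hcyc i hi).resolve_left (h₁ i hi)

end FinDigraph

namespace FinHypergraph

variable {α : Type*} [DecidableEq α]

def union (H₁ H₂ : FinHypergraph α) : FinHypergraph α where
  verts := H₁.verts ∪ H₂.verts
  edges := H₁.edges ∪ H₂.edges
  edge_sub e he := (Finset.mem_union.1 he).elim
    (fun h => (H₁.edge_sub e h).trans Finset.subset_union_left)
    (fun h => (H₂.edge_sub e h).trans Finset.subset_union_right)
  edge_card e he := (Finset.mem_union.1 he).elim (H₁.edge_card e) (H₂.edge_card e)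

theorem union_comm (H₁ H₂ : FinHypergraph α) : H₁.union H₂ = H₂.union H₁ := by
  simp only [union, Finset.union_comm]

theorem degree_pos_of_mem {H : FinHypergraph α} {e : Finset α} (he : e ∈ H.edges) {v : α}
    (hv : v ∈ e) : 0 < H.degree v :=
  Finset.card_pos.2 ⟨e, Finset.mem_filter.2 ⟨he, hv⟩⟩

theorem degree_union {H₁ H₂ : FinHypergraph α} (h : Disjoint H₁.edges H₂.edges) (v : α) :
    (H₁.union H₂).degree v = H₁.degree v + H₂.degree v := by
  simp only [degree, union, Finset.filter_union]
  exact Finset.card_union_of_disjoint (Finset.disjoint_filter_filter h)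

theorem disjoint_edges_of_card_inter_verts_le_one {H₁ H₂ : FinHypergraph α}
    (h : (H₁.verts ∩ H₂.verts).card ≤ 1) : Disjoint H₁.edges H₂.edges := by
  refine Finset.disjoint_left.2 fun e he₁ he₂ => ?_
  have hsub := Finset.card_le_card (Finset.subset_inter (H₁.edge_sub e he₁) (H₂.edge_sub e he₂))
  have := H₁.edge_card e he₁
  omega

end FinHypergraph

def transitBuds {α : Type*} [DecidableEq α] (D : FinDigraph α) (H : FinHypergraph α)
    (e : Finset α) : Finset α :=
  e.filter fun v => H.degree v = 1 ∧ (D.inN v).Nonempty ∧ (D.outN v).Nonempty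

section Gluing

variable {α : Type*} [DecidableEq α] {D₁ D₂ : FinDigraph α} {H₁ H₂ : FinHypergraph α} {u : α}

theorem transitBuds_union_subset_left {e : Finset α} (h₁ : D₁.ArcsWithin) (h₂ : D₂.ArcsWithin)
    (hV : D₁.verts ∩ D₂.verts ⊆ {u}) (hV₁ : D₁.verts = H₁.verts)
    (hdisj : Disjoint H₁.edges H₂.edges) (hu : 0 < H₂.degree u) (he : e ∈ H₁.edges) :
    transitBuds (D₁.union D₂) (H₁.union H₂) e ⊆ transitBuds D₁ H₁ e := by
  intro v hv
  simp only [transitBuds, Finset.mem_filter, FinHypergraph.degree_union hdisj] at hv ⊢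
  obtain ⟨hve, hdeg, hin, hout⟩ := hv
  have hpos := FinHypergraph.degree_pos_of_mem he hve
  have hvu : v ≠ u := by
    rintro rfl
    omega
  have hv₂ : v ∉ D₂.verts := (Finset.notMem_or_notMem_of_inter_subset_singleton hV hvu).resolve_left
    (not_not.2 (hV₁ ▸ H₁.edge_sub e he hve))
  rw [FinDigraph.inN_union h₁ h₂, FinDigraph.inN_eq_empty_of_notMem h₂ hv₂,
    Finset.union_empty] at hin
  rw [FinDigraph.outN_union h₁ h₂, FinDigraph.outN_eq_empty_of_notMem h₂ hv₂,
    Finset.union_empty] at hout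
  exact ⟨hve, by omega, hin, hout⟩

theorem GoodDigraph.union (h₁ : D₁.ArcsWithin) (h₂ : D₂.ArcsWithin)
    (hV : D₁.verts ∩ D₂.verts ⊆ {u}) (hin : D₁.inN u = ∅) (hout : D₂.outN u = ∅)
    (hg₁ : GoodDigraph D₁ H₁) (hg₂ : GoodDigraph D₂ H₂) (hu₁ : 0 < H₁.degree u)
    (hu₂ : 0 < H₂.degree u) : GoodDigraph (D₁.union D₂) (H₁.union H₂) := by
  obtain ⟨hac₁, hV₁, hNH₁, hbud₁⟩ := hg₁
  obtain ⟨hac₂, hV₂, hNH₂, hbud₂⟩ := hg₂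
  have hsplit : ∀ v, v ≠ u → v ∉ D₁.verts ∨ v ∉ D₂.verts :=
    fun v => Finset.notMem_or_notMem_of_inter_subset_singleton hV
  have hdisj : Disjoint H₁.edges H₂.edges := by
    refine FinHypergraph.disjoint_edges_of_card_inter_verts_le_one ?_
    rw [← hV₁, ← hV₂]
    exact (Finset.card_le_card hV).trans (Finset.card_singleton u).le
  have hturn : ∀ a b c, (a, b) ∈ D₁.arcs → (b, c) ∉ D₂.arcs := by
    intro a b c hab hbc
    obtain rfl : b = u :=
      Finset.mem_singleton.1 (hV (Finset.mem_inter.2 ⟨(h₁ _ hab).2, (h₂ _ hbc).1⟩))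
    simpa [hin] using FinDigraph.mem_inN.2 ⟨(h₁ _ hab).1, hab⟩
  have hinN : ∀ v, D₁.inN v = ∅ ∨ D₂.inN v = ∅ := fun v => by
    by_cases hvu : v = u
    · exact .inl (hvu ▸ hin)
    · exact (hsplit v hvu).imp (FinDigraph.inN_eq_empty_of_notMem h₁)
        (FinDigraph.inN_eq_empty_of_notMem h₂)
  have houtN : ∀ v, D₁.outN v = ∅ ∨ D₂.outN v = ∅ := fun v => by
    by_cases hvu : v = u
    · exact .inr (hvu ▸ hout)
    · exact (hsplit v hvu).imp (FinDigraph.outN_eq_empty_of_notMem h₁)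
        (FinDigraph.outN_eq_empty_of_notMem h₂)
  refine ⟨hac₁.union hac₂ hturn, by simp [FinDigraph.union, FinHypergraph.union, hV₁, hV₂],
    by rw [FinDigraph.NH_union h₁ h₂ hinN houtN, hNH₁, hNH₂]; rfl, fun e he => ?_⟩
  rcases Finset.mem_union.1 he with he | he
  · exact (Finset.card_le_card
      (transitBuds_union_subset_left h₁ h₂ hV hV₁ hdisj hu₂ he)).trans (hbud₁ e he)
  · rw [FinDigraph.union_comm, FinHypergraph.union_comm]
    exact (Finset.card_le_card (transitBuds_union_subset_left h₂ h₁
      (Finset.inter_comm D₁.verts D₂.verts ▸ hV) hV₂ hdisj.symm hu₁ he)).trans (hbud₂ e he)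

end Gluing

/-- Gluing two good digraphs at a common bud `u`, which is a source in one and a sink in
the other, yields a good digraph of the union hypergraph. -/
theorem glue_good_digraphs {α : Type*} [DecidableEq α]
    (D1 D2 : FinDigraph α) (h1 : D1.IsLegal) (h2 : D2.IsLegal)
    (H1 H2 : FinHypergraph α) (u : α)
    (hint : D1.verts ∩ D2.verts = {u})
    (hin : D1.inN u = ∅) (hout : D2.outN u = ∅)
    (hg1 : GoodDigraph D1 H1) (hg2 : GoodDigraph D2 H2)
    (hb1 : H1.degree u = 1) (hb2 : H2.degree u = 1) :
    ∃ H : FinHypergraph α, H.verts = H1.verts ∪ H2.verts ∧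
      H.edges = H1.edges ∪ H2.edges ∧
      GoodDigraph ⟨D1.verts ∪ D2.verts, D1.arcs ∪ D2.arcs⟩ H :=
  ⟨H1.union H2, rfl, rfl, GoodDigraph.union h1.arcsWithin h2.arcsWithin hint.subset hin hout
    hg1 hg2 (by omega) (by omega)⟩
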